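/- arXiv:math/0112207 — 3 statements merged into one kernel-verified Lean document; each statement's English description precedes it below -/
import Mathlib

section
/- Let r₁, r₂ be real numbers with r₁ > r₂ > 0, let λ, z₁', z₂', θ₁', θ₂' be real numbers satisfying z₂' = λ·z₁' and θ₂' = λ·θ₁' (the tangency condition), and suppose z₁' + r₁²·θ₁' > 0 and z₂' + r₂²·θ₂' > 0 (positivity of the contact form on both branches). If θ₁' < 0, then θ₂' < 0. -/
/-- Computational core of Lemma 5: at a tangency of two branches of a transversal
link with `r₁ > r₂ > 0`, `z₂' = λ z₁'`, `θ₂' = λ θ₁'`, and the contact form positive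
on both branches, if `θ₁' < 0` then `θ₂' < 0`. -/
theorem stmt_1 (r₁ r₂ l z₁' z₂' θ₁' θ₂' : ℝ)
    (hr₁₂ : r₁ > r₂) (hr₂ : r₂ > 0)
    (hz : z₂' = l * z₁') (hθ : θ₂' = l * θ₁')
    (h₁ : z₁' + r₁ ^ 2 * θ₁' > 0) (h₂ : z₂' + r₂ ^ 2 * θ₂' > 0)
    (hneg : θ₁' < 0) : θ₂' < 0 := by
  subst hz hθ
  have hsq : r₂ ^ 2 < r₁ ^ 2 := by nlinarith
  have hbase : z₁' + r₂ ^ 2 * θ₁' > 0 := by nlinarith [mul_lt_mul_of_neg_right hsq hneg]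
  have hl : l > 0 := by
    by_contra h
    push_neg at h
    nlinarith
  nlinarith
end

section
/- For every t ∈ (−1, 1), define x(t) = arccos(t²), y(t) = −(3/2)·t·√(1 − t⁴), and z(t) = t³. Then x is differentiable on (−1, 1) with x'(t) = −2t/√(1 − t⁴), and for every t ∈ (−1, 1) one has z'(t) = y(t)·x'(t); that is, the curve t ↦ (x(t), y(t), z(t)) is Legendrian for the contact form dz − y dx. -/
open Real

theorem HasDerivAt.arccos {f : ℝ → ℝ} {f' x : ℝ} (hf : HasDerivAt f f' x)
    (h₁ : f x ≠ -1) (h₂ : f x ≠ 1) :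
    HasDerivAt (fun u => arccos (f u)) (-f' / √(1 - f x ^ 2)) x :=
  ((hasDerivAt_arccos h₁ h₂).comp x hf).congr_deriv (by ring)

/-- The parameterization `x(t) = arccos(t²)`, `y(t) = −(3/2)t√(1−t⁴)`, `z(t) = t³`
of the cusp of the standard Legendrian unknot: on `(−1, 1)` one has
`x'(t) = −2t/√(1−t⁴)` and `z'(t) = y(t)·x'(t)`, i.e. the curve is Legendrian
for `dz − y dx`. -/
theorem stmt_4 :
    ∀ t ∈ Set.Ioo (-1 : ℝ) 1,
      HasDerivAt (fun u : ℝ => Real.arccos (u ^ 2))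
        (-2 * t / Real.sqrt (1 - t ^ 4)) t ∧
      deriv (fun u : ℝ => u ^ 3) t
        = (-(3 / 2) * t * Real.sqrt (1 - t ^ 4)) * (-2 * t / Real.sqrt (1 - t ^ 4)) := by
  rintro t ⟨ht₁, ht₂⟩
  have hsq : t ^ 2 < 1 := (sq_lt_one_iff_abs_lt_one t).2 (abs_lt.2 ⟨ht₁, ht₂⟩)
  have hroot : √(1 - t ^ 4) ≠ 0 := (sqrt_pos.2 (by nlinarith [sq_nonneg t])).ne'
  constructor
  · convert (hasDerivAt_pow 2 t).arccos (by nlinarith [sq_nonneg t]) hsq.ne using 1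
    ring_nf
  · rw [deriv_pow_field]
    field_simp
    ring
end

section
/- In the braid group B₄ (the group presented by generators σ₁, σ₂, σ₃ subject to the relations σᵢσᵢ₊₁σᵢ = σᵢ₊₁σᵢσᵢ₊₁ for i = 1, 2 and σ₁σ₃ = σ₃σ₁), the element σ₁⁻¹σ₂σ₃⁻¹ is conjugate to the element σ₂σ₁⁻¹σ₂⁻¹σ₂⁻¹σ₃. -/
/-!
Conjugate by `σ₂σ₃`. Far commutativity moves `σ₃` past `σ₁⁻¹`, and the braid relation, in the
form `σ₃σ₂σ₃⁻¹ = σ₂⁻¹σ₃σ₂`, then pushes `σ₃` through the remaining letters to the right end.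
-/

/-- Relations of the braid group `B₄` on generators `σ₁, σ₂, σ₃` (indexed `0,1,2`):
`σ₁σ₂σ₁ = σ₂σ₁σ₂`, `σ₂σ₃σ₂ = σ₃σ₂σ₃`, `σ₁σ₃ = σ₃σ₁`. -/
def braidRels4 : Set (FreeGroup (Fin 3)) :=
  { FreeGroup.of 0 * FreeGroup.of 1 * FreeGroup.of 0 *
      (FreeGroup.of 1 * FreeGroup.of 0 * FreeGroup.of 1)⁻¹,
    FreeGroup.of 1 * FreeGroup.of 2 * FreeGroup.of 1 *
      (FreeGroup.of 2 * FreeGroup.of 1 * FreeGroup.of 2)⁻¹,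
    FreeGroup.of 0 * FreeGroup.of 2 * (FreeGroup.of 2 * FreeGroup.of 0)⁻¹ }

/-- The braid group `B₄` as a presented group. -/
def B4 : Type := PresentedGroup braidRels4

noncomputable instance : Group B4 := by unfold B4; infer_instance

/-- The generator `σᵢ₊₁` of `B₄` (so `σ 0 = σ₁`, `σ 1 = σ₂`, `σ 2 = σ₃`). -/
noncomputable def σ (i : Fin 3) : B4 := PresentedGroup.of i

section BraidRelation

variable {G : Type*} [Group G] {s t u : G}

theorem conj_eq_inv_conj_of_braid (h : t * u * t = u * t * u) :
    u * t * u⁻¹ = t⁻¹ * u * t :=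
  calc u * t * u⁻¹ = t⁻¹ * (t * u * t) * u⁻¹ := by group
    _ = t⁻¹ * (u * t * u) * u⁻¹ := by rw [h]
    _ = t⁻¹ * u * t := by group

theorem isConj_of_commute_of_braid (hsu : Commute s u) (htu : t * u * t = u * t * u) :
    IsConj (s⁻¹ * t * u⁻¹) (t * s⁻¹ * t⁻¹ * t⁻¹ * u) := by
  have hconj := conj_eq_inv_conj_of_braid htu
  refine isConj_iff.mpr ⟨t * u, ?_⟩
  calc t * u * (s⁻¹ * t * u⁻¹) * (t * u)⁻¹
      = t * (u * s⁻¹) * t * u⁻¹ * u⁻¹ * t⁻¹ := by group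
    _ = t * s⁻¹ * (u * t * u⁻¹) * u⁻¹ * t⁻¹ := by rw [hsu.inv_left.eq.symm]; group
    _ = t * s⁻¹ * (t⁻¹ * u * t) * u⁻¹ * t⁻¹ := by rw [hconj]
    _ = t * s⁻¹ * t⁻¹ * (u * t * u⁻¹) * t⁻¹ := by group
    _ = t * s⁻¹ * t⁻¹ * (t⁻¹ * u * t) * t⁻¹ := by rw [hconj]
    _ = t * s⁻¹ * t⁻¹ * t⁻¹ * u := by group

end BraidRelation

theorem σ_braid_one_two : σ 1 * σ 2 * σ 1 = σ 2 * σ 1 * σ 2 :=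
  PresentedGroup.mk_eq_mk_of_mul_inv_mem (by simp [braidRels4])

theorem σ_commute_zero_two : Commute (σ 0) (σ 2) :=
  PresentedGroup.mk_eq_mk_of_mul_inv_mem (by simp [braidRels4])

/-- In `B₄`, the element `σ₁⁻¹σ₂σ₃⁻¹` is conjugate to `σ₂σ₁⁻¹σ₂⁻¹σ₂⁻¹σ₃`. -/
theorem stmt_8 :
    IsConj ((σ 0)⁻¹ * σ 1 * (σ 2)⁻¹)
      (σ 1 * (σ 0)⁻¹ * (σ 1)⁻¹ * (σ 1)⁻¹ * σ 2) :=
  isConj_of_commute_of_braid σ_commute_zero_two σ_braid_one_two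
end
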